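/- arXiv:2110.11706 — 10 statements merged into one kernel-verified Lean document; each statement's English description precedes it below -/
import Mathlib

section
/- Let A, B, C be n×n positive semidefinite complex matrices with A ≥ B (Loewner order). Then (I + AC)⁻¹A ≥ (I + BC)⁻¹B, where both inverses exist since I + AC and I + BC have spectrum contained in [1, ∞). -/
/-!
Write `P = (1 + A C)⁻¹` and `D = A - B`. A direct computation gives the congruence
`P A - (1 + B C)⁻¹ B = P (D + D K D) Pᴴ` with `K = C (1 + B C)⁻¹ = (1 + C B)⁻¹ C`, so it suffices
that `K` is positive semidefinite. This holds for the same reason: for `X, Y ≥ 0` the matrix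
`(1 + X Y)⁻¹ X` is the congruence of `X + X Y X ≥ 0` by `(1 + X Y)⁻¹`. Invertibility of
`1 + X Y` comes from writing `X = Bᴴ B`, since `det (1 + Bᴴ B Y) = det (1 + B Y Bᴴ) > 0`.
-/

open Matrix ComplexOrder
open scoped MatrixOrder

namespace Matrix

section CommRing

variable {m n α : Type*} [Fintype m] [Fintype n] [DecidableEq m] [DecidableEq n] [CommRing α]

/-- Both sides vanish when `1 + A * B` is singular, so no invertibility hypothesis is needed. -/
theorem inv_one_add_mul_mul_eq_mul_inv_one_add_mul (A : Matrix m n α) (B : Matrix n m α) :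
    (1 + A * B)⁻¹ * A = A * (1 + B * A)⁻¹ := by
  by_cases h : IsUnit (1 + A * B).det
  · have h' : IsUnit (1 + B * A).det := det_one_add_mul_comm A B ▸ h
    calc (1 + A * B)⁻¹ * A = (1 + A * B)⁻¹ * (A * (1 + B * A)) * (1 + B * A)⁻¹ := by
          rw [Matrix.mul_assoc, Matrix.mul_assoc, mul_nonsing_inv _ h', Matrix.mul_one]
      _ = (1 + A * B)⁻¹ * ((1 + A * B) * A) * (1 + B * A)⁻¹ := by
          simp only [Matrix.mul_add, Matrix.add_mul, Matrix.mul_one, Matrix.one_mul,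
            Matrix.mul_assoc]
      _ = A * (1 + B * A)⁻¹ := by rw [nonsing_inv_mul_cancel_left _ _ h]
  · have h' : ¬IsUnit (1 + B * A).det := det_one_add_mul_comm A B ▸ h
    rw [nonsing_inv_apply_not_isUnit _ h, nonsing_inv_apply_not_isUnit _ h',
      Matrix.zero_mul, Matrix.mul_zero]

theorem inv_one_add_mul_mul_sub_inv_one_add_mul_mul {A B C : Matrix n n α}
    (hA : IsUnit (1 + A * C).det) (hB : IsUnit (1 + B * C).det) :
    (1 + A * C)⁻¹ * A - (1 + B * C)⁻¹ * B =
      (1 + A * C)⁻¹ * ((A - B) + (A - B) * (C * (1 + B * C)⁻¹) * (A - B)) * (1 + C * A)⁻¹ := by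
  have hA' : IsUnit (1 + C * A).det := det_one_add_mul_comm A C ▸ hA
  set P := (1 + A * C)⁻¹
  set Q := (1 + B * C)⁻¹
  have key : (1 + A * C) * (P * A - Q * B) * (1 + C * A) =
      (A - B) + (A - B) * (C * Q) * (A - B) :=
    calc (1 + A * C) * (P * A - Q * B) * (1 + C * A)
        = ((1 + A * C) * P) * A * (1 + C * A) - ((1 + B * C) * Q) * B * (1 + C * A)
            - (A - B) * C * (Q * (1 + B * C)) * A + (A - B) * (C * Q) * (A - B) := by
          noncomm_ring
      _ = (A - B) + (A - B) * (C * Q) * (A - B) := by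
          -- the products in parentheses are all `1`
          rw [mul_nonsing_inv _ hA, mul_nonsing_inv _ hB, nonsing_inv_mul _ hB]
          noncomm_ring
  rw [← key, Matrix.mul_assoc, Matrix.mul_assoc, mul_nonsing_inv _ hA', Matrix.mul_one,
    nonsing_inv_mul_cancel_left _ _ hA]

end CommRing

variable {n 𝕜 : Type*} [Fintype n] [DecidableEq n] [RCLike 𝕜]

theorem PosSemidef.isUnit_one_add_mul {X Y : Matrix n n 𝕜} (hX : X.PosSemidef)
    (hY : Y.PosSemidef) : IsUnit (1 + X * Y).det := by
  obtain ⟨B, rfl⟩ := CStarAlgebra.nonneg_iff_eq_star_mul_self.mp hX.nonneg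
  rw [Matrix.mul_assoc, det_one_add_mul_comm, star_eq_conjTranspose]
  exact (PosDef.one.add_posSemidef (hY.mul_mul_conjTranspose_same B)).isUnit.map detMonoidHom

theorem conjTranspose_inv_one_add_mul {X Y : Matrix n n 𝕜} (hX : X.IsHermitian)
    (hY : Y.IsHermitian) : ((1 + X * Y)⁻¹)ᴴ = (1 + Y * X)⁻¹ := by
  rw [conjTranspose_nonsing_inv, conjTranspose_add, conjTranspose_mul, hX.eq, hY.eq,
    conjTranspose_one]

theorem PosSemidef.inv_one_add_mul_mul {X Y : Matrix n n 𝕜} (hX : X.PosSemidef)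
    (hY : Y.PosSemidef) : ((1 + X * Y)⁻¹ * X).PosSemidef := by
  have hXY := hX.isUnit_one_add_mul hY
  have hcongr : (1 + X * Y)⁻¹ * X = (1 + X * Y)⁻¹ * (X + X * Y * Xᴴ) * ((1 + X * Y)⁻¹)ᴴ := by
    rw [conjTranspose_inv_one_add_mul hX.isHermitian hY.isHermitian, hX.isHermitian.eq,
      show X + X * Y * X = (1 + X * Y) * X by noncomm_ring, nonsing_inv_mul_cancel_left _ _ hXY,
      inv_one_add_mul_mul_eq_mul_inv_one_add_mul]
  rw [hcongr]
  exact (hX.add (hY.mul_mul_conjTranspose_same X)).mul_mul_conjTranspose_same _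

end Matrix

theorem stmt_0 (n : ℕ) (A B C : Matrix (Fin n) (Fin n) ℂ)
    (hA : A.PosSemidef) (hB : B.PosSemidef) (hC : C.PosSemidef)
    (hAB : (A - B).PosSemidef) :
    ((1 + A * C)⁻¹ * A - (1 + B * C)⁻¹ * B).PosSemidef := by
  have hK : (C * (1 + B * C)⁻¹).PosSemidef := by
    rw [← inv_one_add_mul_mul_eq_mul_inv_one_add_mul]
    exact hC.inv_one_add_mul_mul hB
  have hE : ((A - B) + (A - B) * (C * (1 + B * C)⁻¹) * (A - B)).PosSemidef := by
    simpa only [hAB.isHermitian.eq] using hAB.add (hK.mul_mul_conjTranspose_same (A - B))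
  rw [inv_one_add_mul_mul_sub_inv_one_add_mul_mul (hA.isUnit_one_add_mul hC)
    (hB.isUnit_one_add_mul hC), ← conjTranspose_inv_one_add_mul hA.isHermitian hC.isHermitian]
  exact hE.mul_mul_conjTranspose_same _
end

section
/- Let A be an n×n complex matrix, G, H n×n positive semidefinite matrices, and define R_d(X) = H + A* X (I + GX)⁻¹ A for X positive semidefinite. Then R_d is order preserving on positive semidefinite matrices: if X ≥ Y ≥ 0 then R_d(X) ≥ R_d(Y). -/
/-
Write `G = b⋆ b`. Completing the square shows that `x (1 + G x)⁻¹` is the minimum over `w` of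
`(1 - b⋆ w)⋆ x (1 - b⋆ w) + w⋆ w`, attained at `w = (1 + b x b⋆)⁻¹ b x`. Each of these
expressions is monotone in `x`, hence so is their minimum; conjugating by `A` preserves the order.
-/

open Matrix ComplexOrder

open scoped Ring

section StarRing

variable {R : Type*} [Ring R] [StarRing R]

theorem Ring.inverse_one_add_star_mul_mul {b x : R} (hm : IsUnit (1 + b * x * star b)) :
    (1 + star b * b * x)⁻¹ʳ = 1 - star b * (1 + b * x * star b)⁻¹ʳ * b * x := by
  set p := (1 + b * x * star b)⁻¹ʳ
  have hmp : (1 + b * x * star b) * p = 1 := Ring.mul_inverse_cancel _ hm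
  have hpm : p * (1 + b * x * star b) = 1 := Ring.inverse_mul_cancel _ hm
  refine Ring.inverse_unit ⟨_, 1 - star b * p * b * x, ?_, ?_⟩
  · calc (1 + star b * b * x) * (1 - star b * p * b * x)
        = 1 + star b * (1 - (1 + b * x * star b) * p) * b * x := by noncomm_ring
      _ = 1 := by simp [hmp]
  · calc (1 - star b * p * b * x) * (1 + star b * b * x)
        = 1 + star b * (1 - p * (1 + b * x * star b)) * b * x := by noncomm_ring
      _ = 1 := by simp [hpm]

theorem star_one_sub_mul_mul_mul_add_star_mul_self_eq {b x : R} (hx : IsSelfAdjoint x)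
    (hm : IsUnit (1 + b * x * star b)) (w : R) :
    star (1 - star b * w) * x * (1 - star b * w) + star w * w =
      x * (1 + star b * b * x)⁻¹ʳ +
        star (w - (1 + b * x * star b)⁻¹ʳ * b * x) * (1 + b * x * star b) *
          (w - (1 + b * x * star b)⁻¹ʳ * b * x) := by
  have hp : IsSelfAdjoint (1 + b * x * star b)⁻¹ʳ :=
    ((IsSelfAdjoint.one R).add (hx.conjugate b)).ringInverse
  rw [Ring.inverse_one_add_star_mul_mul hm]
  set m := 1 + b * x * star b with hm_def
  set p := m⁻¹ʳ
  have hmp : m * p = 1 := Ring.mul_inverse_cancel _ hm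
  have hpm : p * m = 1 := Ring.inverse_mul_cancel _ hm
  calc _ = x * (1 - star b * p * b * x) + (star w * m * w - star w * (m * p) * b * x
          - x * star b * (p * m) * w + x * star b * p * (m * p) * b * x) := by
        rw [hmp, hpm, hm_def]; simp only [star_sub, star_mul, star_one, star_star]; noncomm_ring
    _ = _ := by simp only [star_sub, star_mul, hx.star_eq, hp.star_eq]; noncomm_ring

theorem mul_ringInverse_one_add_star_mul_mul_le [PartialOrder R] [StarOrderedRing R] {b x y : R}
    (hy : 0 ≤ y) (hyx : y ≤ x) (hxu : IsUnit (1 + b * x * star b))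
    (hyu : IsUnit (1 + b * y * star b)) :
    y * (1 + star b * b * y)⁻¹ʳ ≤ x * (1 + star b * b * x)⁻¹ʳ := by
  set w := (1 + b * x * star b)⁻¹ʳ * b * x
  have hmy : 0 ≤ 1 + b * y * star b := add_nonneg zero_le_one (star_right_conjugate_nonneg hy b)
  calc y * (1 + star b * b * y)⁻¹ʳ
      ≤ y * (1 + star b * b * y)⁻¹ʳ + star (w - (1 + b * y * star b)⁻¹ʳ * b * y) *
          (1 + b * y * star b) * (w - (1 + b * y * star b)⁻¹ʳ * b * y) :=
        le_add_of_nonneg_right (star_left_conjugate_nonneg hmy _)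
    _ = star (1 - star b * w) * y * (1 - star b * w) + star w * w :=
        (star_one_sub_mul_mul_mul_add_star_mul_self_eq (.of_nonneg hy) hyu w).symm
    _ ≤ star (1 - star b * w) * x * (1 - star b * w) + star w * w := by
        gcongr; exact star_left_conjugate_le_conjugate hyx _
    _ = x * (1 + star b * b * x)⁻¹ʳ := by
        rw [star_one_sub_mul_mul_mul_add_star_mul_self_eq (.of_nonneg (hy.trans hyx)) hxu w,
          sub_self, mul_zero, add_zero]

end StarRing

open scoped MatrixOrder in
theorem Matrix.mul_inv_one_add_mul_le_of_le {𝕜 n : Type*} [RCLike 𝕜] [Fintype n] [DecidableEq n]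
    {G X Y : Matrix n n 𝕜} (hG : 0 ≤ G) (hY : 0 ≤ Y) (hYX : Y ≤ X) :
    Y * (1 + G * Y)⁻¹ ≤ X * (1 + G * X)⁻¹ := by
  set b := CFC.sqrt G
  have hbb : star b * b = G := by
    rw [(IsSelfAdjoint.of_nonneg (CFC.sqrt_nonneg G)).star_eq, CFC.sqrt_mul_sqrt_self G hG]
  have hunit {Z : Matrix n n 𝕜} (hZ : 0 ≤ Z) : IsUnit (1 + b * Z * star b) :=
    (PosDef.one.add_posSemidef (star_right_conjugate_nonneg hZ b).posSemidef).isUnit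
  simp only [nonsing_inv_eq_ringInverse, ← hbb]
  exact mul_ringInverse_one_add_star_mul_mul_le hY hYX (hunit (hY.trans hYX)) (hunit hY)

theorem stmt_1_general (n : ℕ) (A G H X Y : Matrix (Fin n) (Fin n) ℂ)
    (hG : G.PosSemidef)
    (hY : Y.PosSemidef)
    (hXY : (X - Y).PosSemidef) :
    ((H + Aᴴ * X * (1 + G * X)⁻¹ * A) - (H + Aᴴ * Y * (1 + G * Y)⁻¹ * A)).PosSemidef := by
  have hle : (X * (1 + G * X)⁻¹ - Y * (1 + G * Y)⁻¹).PosSemidef :=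
    open scoped MatrixOrder in mul_inv_one_add_mul_le_of_le hG.nonneg hY.nonneg hXY
  convert hle.conjTranspose_mul_mul_same A using 1
  simp only [add_sub_add_left_eq_sub, mul_sub, sub_mul, mul_assoc]

theorem stmt_1 (n : ℕ) (A G H X Y : Matrix (Fin n) (Fin n) ℂ)
    (hG : G.PosSemidef) (hH : H.PosSemidef)
    (hX : X.PosSemidef) (hY : Y.PosSemidef)
    (hXY : (X - Y).PosSemidef) :
    ((H + Aᴴ * X * (1 + G * X)⁻¹ * A) - (H + Aᴴ * Y * (1 + G * Y)⁻¹ * A)).PosSemidef :=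
  stmt_1_general n A G H X Y hG hY hXY
end

section
/- Let F : H_n → H_n be an order-preserving map on n×n Hermitian matrices, continuous on the order interval [X̂₂, X̂₁], where X̂₁ ≥ F(X̂₁), X̂₂ ≤ F(X̂₂), and X̂₁ ≥ X̂₂. Then F maps [X̂₂, X̂₁] into itself and F has a fixed point in [X̂₂, X̂₁]. -/
/-!
The iterates `F^[k] X₂` increase and stay in `[X₂, X₁]`. Order intervals of Hermitian matrices
are compact (closed, and bounded since `0 ≤ A ≤ B` forces `‖A‖ ≤ ‖B‖` in the C⋆-norm), and every
cluster point of a monotone sequence is its supremum, so the iterates converge; by continuity of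
`F` on the interval their limit is a fixed point.
-/

open Set Filter Topology Function Matrix ComplexOrder

section MonotoneConvergence

variable {α : Type*} [PartialOrder α] [TopologicalSpace α] [OrderClosedTopology α]

theorem Monotone.isLUB_of_mapClusterPt {ι : Type*} [Preorder ι] {u : ι → α} (hu : Monotone u)
    {c : α} (hc : MapClusterPt c atTop u) : IsLUB (range u) c := by
  refine ⟨?_, fun d hd => isClosed_Iic.mem_of_mapClusterPt hc (.of_forall fun k => hd ⟨k, rfl⟩)⟩
  rintro _ ⟨k, rfl⟩
  exact isClosed_Ici.mem_of_mapClusterPt hc ((eventually_ge_atTop k).mono fun m hm => hu hm)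

theorem Monotone.exists_isLUB_tendsto [CompactIccSpace α] {ι : Type*} [Preorder ι] [Nonempty ι]
    [IsDirectedOrder ι] {u : ι → α} (hu : Monotone u) (hbdd : BddAbove (range u)) :
    ∃ c, IsLUB (range u) c ∧ Tendsto u atTop (𝓝 c) := by
  obtain ⟨b, hb⟩ := hbdd
  obtain ⟨i₀⟩ := ‹Nonempty ι›
  have hmem : ∀ᶠ k in atTop, u k ∈ Icc (u i₀) b :=
    (eventually_ge_atTop i₀).mono fun k hk => ⟨hu hk, hb ⟨k, rfl⟩⟩
  obtain ⟨c, -, hc⟩ := isCompact_Icc.exists_mapClusterPt (le_principal_iff.2 hmem)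
  refine ⟨c, hu.isLUB_of_mapClusterPt hc, isCompact_Icc.tendsto_nhds_of_unique_mapClusterPt hmem
    fun d _ hd => (hu.isLUB_of_mapClusterPt hd).unique (hu.isLUB_of_mapClusterPt hc)⟩

end MonotoneConvergence

theorem isFixedPt_of_tendsto_iterate_of_continuousWithinAt {α : Type*} [TopologicalSpace α]
    [T2Space α] {f : α → α} {s : Set α} {x y : α} (hy : Tendsto (fun n => f^[n] x) atTop (𝓝 y))
    (hs : ∀ n, f^[n] x ∈ s) (hf : ContinuousWithinAt f s y) : IsFixedPt f y := by
  refine tendsto_nhds_unique ((tendsto_add_atTop_iff_nat 1).1 ?_) hy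
  simp only [iterate_succ' f]
  exact hf.tendsto.comp (tendsto_nhdsWithin_iff.2 ⟨hy, .of_forall hs⟩)

theorem MonotoneOn.exists_isFixedPt_Icc {α : Type*} [PartialOrder α] [TopologicalSpace α]
    [OrderClosedTopology α] [CompactIccSpace α] {f : α → α} {a b : α} (hab : a ≤ b)
    (hf : MonotoneOn f (Icc a b)) (hfc : ContinuousOn f (Icc a b)) (ha : a ≤ f a)
    (hb : f b ≤ b) : ∃ x ∈ Icc a b, IsFixedPt f x := by
  have hmaps : MapsTo f (Icc a b) (Icc a b) := hf.mapsTo_Icc.mono_right (Icc_subset_Icc ha hb)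
  have hmem : ∀ k, f^[k] a ∈ Icc a b := fun k => hmaps.iterate k (left_mem_Icc.2 hab)
  have hmono : Monotone fun k => f^[k] a := by
    refine monotone_nat_of_le_succ fun k => ?_
    induction k with
    | zero => exact ha
    | succ k ih =>
      simpa only [iterate_succ_apply'] using hf (hmem k) (hmem (k + 1)) ih
  obtain ⟨x, hlub, hx⟩ := hmono.exists_isLUB_tendsto ⟨b, forall_mem_range.2 fun k => (hmem k).2⟩
  have hxmem : x ∈ Icc a b := ⟨hlub.1 ⟨0, rfl⟩, hlub.2 (forall_mem_range.2 fun k => (hmem k).2)⟩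
  exact ⟨x, hxmem, isFixedPt_of_tendsto_iterate_of_continuousWithinAt hx hmem (hfc x hxmem)⟩

theorem CStarAlgebra.isCompact_Icc {A : Type*} [NonUnitalCStarAlgebra A] [PartialOrder A]
    [StarOrderedRing A] [ProperSpace A] (a b : A) : IsCompact (Icc a b) := by
  refine Metric.isCompact_of_isClosed_isBounded isClosed_Icc
    ((Metric.isBounded_closedBall (x := a) (r := ‖b - a‖)).subset fun x hx => ?_)
  rw [mem_closedBall_iff_norm]
  exact CStarAlgebra.norm_le_norm_of_nonneg_of_le (sub_nonneg.2 hx.1) (sub_le_sub_right hx.2 a)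

open scoped MatrixOrder

namespace Matrix

variable {ι : Type*} [Fintype ι] [DecidableEq ι]

/- The L2 operator norm makes `Matrix ι ι ℂ` a C⋆-algebra without changing its (entrywise)
topology, so the order-topological facts about C⋆-algebras transfer. -/

instance instOrderClosedTopology : OrderClosedTopology (Matrix ι ι ℂ) := by
  open scoped Matrix.Norms.L2Operator in
  exact inferInstance

instance instCompactIccSpace : CompactIccSpace (Matrix ι ι ℂ) := by
  open scoped Matrix.Norms.L2Operator in
  exact ⟨@fun a b => CStarAlgebra.isCompact_Icc a b⟩

end Matrix

theorem Matrix.IsHermitian.of_le {ι 𝕜 : Type*} [RCLike 𝕜] {A B : Matrix ι ι 𝕜}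
    (hA : A.IsHermitian) (hAB : A ≤ B) : B.IsHermitian := by
  simpa using (le_iff.1 hAB).isHermitian.add hA

theorem stmt_3_general (n : ℕ) (F : Matrix (Fin n) (Fin n) ℂ → Matrix (Fin n) (Fin n) ℂ)
    (X₁ X₂ : Matrix (Fin n) (Fin n) ℂ)
    (hX₂ : X₂.IsHermitian)
    (hmono : ∀ X Y : Matrix (Fin n) (Fin n) ℂ, X.IsHermitian → Y.IsHermitian →
      (X - Y).PosSemidef → (F X - F Y).PosSemidef)
    (hcont : ContinuousOn F
      {C | C.IsHermitian ∧ (X₁ - C).PosSemidef ∧ (C - X₂).PosSemidef})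
    (h₁ : (X₁ - F X₁).PosSemidef) (h₂ : (F X₂ - X₂).PosSemidef)
    (h₁₂ : (X₁ - X₂).PosSemidef) :
    (∀ C : Matrix (Fin n) (Fin n) ℂ,
      C.IsHermitian → (X₁ - C).PosSemidef → (C - X₂).PosSemidef →
        (X₁ - F C).PosSemidef ∧ (F C - X₂).PosSemidef) ∧
    ∃ X : Matrix (Fin n) (Fin n) ℂ, X.IsHermitian ∧
      (X₁ - X).PosSemidef ∧ (X - X₂).PosSemidef ∧ F X = X := by
  have hherm : ∀ C ∈ Icc X₂ X₁, C.IsHermitian := fun C hC => hX₂.of_le hC.1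
  have hIcc : {C | C.IsHermitian ∧ (X₁ - C).PosSemidef ∧ (C - X₂).PosSemidef} = Icc X₂ X₁ :=
    ext fun C => ⟨fun hC => ⟨hC.2.2, hC.2.1⟩, fun hC => ⟨hherm C hC, hC.2, hC.1⟩⟩
  have hF : MonotoneOn F (Icc X₂ X₁) := fun X hX Y hY hXY => hmono Y X (hherm Y hY) (hherm X hX) hXY
  have hmaps : MapsTo F (Icc X₂ X₁) (Icc X₂ X₁) := hF.mapsTo_Icc.mono_right (Icc_subset_Icc h₂ h₁)
  obtain ⟨X, hX, hFX⟩ := hF.exists_isFixedPt_Icc h₁₂ (hIcc ▸ hcont) h₂ h₁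
  exact ⟨fun C _ h₁C h₂C => (hmaps ⟨h₂C, h₁C⟩).symm, X, hherm X hX, hX.2, hX.1, hFX⟩

theorem stmt_3 (n : ℕ) (F : Matrix (Fin n) (Fin n) ℂ → Matrix (Fin n) (Fin n) ℂ)
    (X₁ X₂ : Matrix (Fin n) (Fin n) ℂ)
    (hX₁ : X₁.IsHermitian) (hX₂ : X₂.IsHermitian)
    (hherm : ∀ X : Matrix (Fin n) (Fin n) ℂ, X.IsHermitian → (F X).IsHermitian)
    (hmono : ∀ X Y : Matrix (Fin n) (Fin n) ℂ, X.IsHermitian → Y.IsHermitian →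
      (X - Y).PosSemidef → (F X - F Y).PosSemidef)
    (hcont : ContinuousOn F
      {C | C.IsHermitian ∧ (X₁ - C).PosSemidef ∧ (C - X₂).PosSemidef})
    (h₁ : (X₁ - F X₁).PosSemidef) (h₂ : (F X₂ - X₂).PosSemidef)
    (h₁₂ : (X₁ - X₂).PosSemidef) :
    (∀ C : Matrix (Fin n) (Fin n) ℂ,
      C.IsHermitian → (X₁ - C).PosSemidef → (C - X₂).PosSemidef →
        (X₁ - F C).PosSemidef ∧ (F C - X₂).PosSemidef) ∧
    ∃ X : Matrix (Fin n) (Fin n) ℂ, X.IsHermitian ∧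
      (X₁ - X).PosSemidef ∧ (X - X₂).PosSemidef ∧ F X = X :=
  stmt_3_general n F X₁ X₂ hX₂ hmono hcont h₁ h₂ h₁₂
end

section
/- Let A be an n×n complex matrix and Q a positive definite Hermitian matrix with Q − A*QA positive semidefinite. If there exists a positive definite Hermitian X solving X + A*XA = Q, then ρ(A) ≤ 1 and all unimodular eigenvalues of A are semisimple. If moreover Q − A*QA is positive definite, then ρ(A) < 1. -/
/-!
For a Hermitian `M ≥ 0`, the condition `M - AᴴMA ≥ 0` says that `A` does not increase the
seminorm `‖x‖_M = √(Re xᴴMx)`; for `M = Q > 0` this applied to an eigenvector gives `|μ| ≤ 1`,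
and `|μ| < 1` when `Q - AᴴQA > 0`. Substituting `Q = X + AᴴXA` shows
`X - (A²)ᴴXA² = Q - AᴴQA ≥ 0`, so `B = A²` is a contraction for the norm `‖·‖_X`.
Such a `B` has no Jordan chain `Bw = λw`, `Bv = λv + w`, `w ≠ 0`, at a unimodular `λ`:
since `B(v + cw) = λ(v + (c + λ⁻¹)w)`, iterating gives `‖v + kλ⁻¹w‖ ≤ ‖v‖` for every `k`,
whereas `k‖w‖ ≤ ‖v + kλ⁻¹w‖ + ‖v‖`. Finally, a Jordan chain of `A` at `μ ≠ 0` is killed by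
`(A² - μ²)² = (A + μ)²(A - μ)²`, so semisimplicity of `μ²` for `A²` forces
`(A + μ)(A - μ)v = 0`, which together with `(A - μ)²v = 0` gives `2μ(A - μ)v = 0`.
-/

open Matrix ComplexOrder

theorem Seminorm.eq_zero_of_jordan_chain {𝕜 E : Type*} [RCLike 𝕜]
    [AddCommGroup E] [Module 𝕜 E] (p : Seminorm 𝕜 E) (f : E →ₗ[𝕜] E)
    (hf : ∀ x, p (f x) ≤ p x) {μ : 𝕜} (hμ : ‖μ‖ = 1) {v w : E}
    (hw : f w = μ • w) (hv : f v = μ • v + w) : p w = 0 := by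
  have hμ0 : μ ≠ 0 := norm_ne_zero_iff.mp (hμ ▸ one_ne_zero)
  have hshift : ∀ c : 𝕜, v + (c + μ⁻¹) • w = μ⁻¹ • f (v + c • w) := by
    intro c
    rw [map_add, map_smul, hv, hw]
    match_scalars
    · field_simp
    · field_simp
      ring
  have hbound : ∀ k : ℕ, p (v + ((k : 𝕜) * μ⁻¹) • w) ≤ p v := by
    intro k
    induction k with
    | zero => simp
    | succ k ih =>
      calc p (v + (((k + 1 : ℕ) : 𝕜) * μ⁻¹) • w)
          = p (f (v + ((k : 𝕜) * μ⁻¹) • w)) := by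
            rw [Nat.cast_succ, add_mul, one_mul, hshift, map_smul_eq_mul, norm_inv, hμ, inv_one,
              one_mul]
        _ ≤ p v := (hf _).trans ih
  have hlinear : ∀ k : ℕ, (k : ℝ) * p w ≤ 2 * p v := by
    intro k
    calc (k : ℝ) * p w = p (((k : 𝕜) * μ⁻¹) • w) := by
          rw [map_smul_eq_mul, norm_mul, norm_inv, hμ, inv_one, mul_one, norm_natCast]
      _ = p ((v + ((k : 𝕜) * μ⁻¹) • w) - v) := by rw [add_sub_cancel_left]
      _ ≤ p (v + ((k : 𝕜) * μ⁻¹) • w) + p v := map_sub_le_add p _ _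
      _ ≤ 2 * p v := by linarith [hbound k]
  by_contra hw
  have hpos : 0 < p w := lt_of_le_of_ne (apply_nonneg p w) (Ne.symm hw)
  obtain ⟨k, hk⟩ := exists_nat_gt (2 * p v / p w)
  rw [div_lt_iff₀ hpos] at hk
  linarith [hlinear k]

theorem sub_star_mul_self_mul_mul_self {R : Type*} [Ring R] [StarRing R] {x a q : R}
    (h : x + star a * x * a = q) : x - star (a * a) * x * (a * a) = q - star a * q * a := by
  subst h
  rw [star_mul]
  noncomm_ring

namespace Matrix
variable {n : Type*} [Fintype n]

theorem dotProduct_mulVec_sub_conjTranspose_mul_mul {R : Type*} [CommRing R] [StarRing R]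
    (M N : Matrix n n R) (x : n → R) :
    star x ⬝ᵥ ((M - Nᴴ * M * N) *ᵥ x)
      = star x ⬝ᵥ (M *ᵥ x) - star (N *ᵥ x) ⬝ᵥ (M *ᵥ (N *ᵥ x)) := by
  rw [sub_mulVec, dotProduct_sub, Matrix.mul_assoc, ← mulVec_mulVec, ← mulVec_mulVec,
    dotProduct_mulVec _ Nᴴ, ← star_mulVec]

variable {𝕜 : Type*} [RCLike 𝕜] {M : Matrix n n 𝕜}

noncomputable def PosSemidef.seminorm (hM : M.PosSemidef) : Seminorm 𝕜 (n → 𝕜) :=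
  @normSeminorm 𝕜 (n → 𝕜) _ (M.toSeminormedAddCommGroup hM)
    (@InnerProductSpace.toNormedSpace _ _ _ _ (M.toInnerProductSpace hM))

theorem PosSemidef.seminorm_sq (hM : M.PosSemidef) (x : n → 𝕜) :
    hM.seminorm x ^ 2 = RCLike.re (star x ⬝ᵥ (M *ᵥ x)) := by
  rw [dotProduct_comm]
  exact @norm_sq_eq_re_inner 𝕜 _ _ (M.toSeminormedAddCommGroup hM) (M.toInnerProductSpace hM) x

theorem PosDef.seminorm_pos (hM : M.PosDef) {x : n → 𝕜} (hx : x ≠ 0) :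
    0 < hM.posSemidef.seminorm x := by
  have := hM.re_dotProduct_pos hx
  rw [← hM.posSemidef.seminorm_sq] at this
  exact lt_of_le_of_ne (apply_nonneg _ _) (fun h => by simp [← h] at this)

theorem PosSemidef.seminorm_mulVec_le (hM : M.PosSemidef) {N : Matrix n n 𝕜}
    (hMN : (M - Nᴴ * M * N).PosSemidef) (x : n → 𝕜) :
    hM.seminorm (N *ᵥ x) ≤ hM.seminorm x := by
  have := hMN.re_dotProduct_nonneg x
  rw [dotProduct_mulVec_sub_conjTranspose_mul_mul, map_sub, ← hM.seminorm_sq,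
    ← hM.seminorm_sq, sub_nonneg] at this
  exact (pow_le_pow_iff_left₀ (apply_nonneg _ _) (apply_nonneg _ _) two_ne_zero).mp this

theorem PosSemidef.seminorm_mulVec_lt (hM : M.PosSemidef) {N : Matrix n n 𝕜}
    (hMN : (M - Nᴴ * M * N).PosDef) {x : n → 𝕜} (hx : x ≠ 0) :
    hM.seminorm (N *ᵥ x) < hM.seminorm x := by
  have := hMN.re_dotProduct_pos hx
  rw [dotProduct_mulVec_sub_conjTranspose_mul_mul, map_sub, ← hM.seminorm_sq,
    ← hM.seminorm_sq, sub_pos] at this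
  exact (pow_lt_pow_iff_left₀ (apply_nonneg _ _) (apply_nonneg _ _) two_ne_zero).mp this

variable [DecidableEq n]

theorem PosDef.sub_smul_mulVec_eq_zero_of_stein {X B : Matrix n n 𝕜} (hX : X.PosDef)
    (hXB : (X - Bᴴ * X * B).PosSemidef) {μ : 𝕜} (hμ : ‖μ‖ = 1) {v : n → 𝕜}
    (hv : (B - μ • 1) *ᵥ ((B - μ • 1) *ᵥ v) = 0) : (B - μ • 1) *ᵥ v = 0 := by
  by_contra hw
  refine (hX.seminorm_pos hw).ne' <| hX.posSemidef.seminorm.eq_zero_of_jordan_chain B.mulVecLin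
    (hX.posSemidef.seminorm_mulVec_le hXB) hμ (v := v) ?_ ?_
  · simpa [sub_mulVec, smul_mulVec, sub_eq_zero] using hv
  · simp [sub_mulVec, smul_mulVec]

theorem exists_mulVec_eq_smul_of_mem_spectrum {K : Type*} [Field K] {A : Matrix n n K} {μ : K}
    (hμ : μ ∈ spectrum K A) : ∃ v ≠ 0, A *ᵥ v = μ • v := by
  rw [← spectrum_toLin', ← Module.End.hasEigenvalue_iff_mem_spectrum] at hμ
  obtain ⟨v, hv⟩ := hμ.exists_hasEigenvector
  exact ⟨v, hv.2, by simpa using hv.apply_eq_smul⟩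

theorem PosDef.norm_le_one_of_mem_spectrum {A : Matrix n n 𝕜} (hM : M.PosDef)
    (hMA : (M - Aᴴ * M * A).PosSemidef) {μ : 𝕜} (hμ : μ ∈ spectrum 𝕜 A) : ‖μ‖ ≤ 1 := by
  obtain ⟨v, hv, hAv⟩ := exists_mulVec_eq_smul_of_mem_spectrum hμ
  have := hM.posSemidef.seminorm_mulVec_le hMA v
  rw [hAv, map_smul_eq_mul] at this
  exact (mul_le_iff_le_one_left (hM.seminorm_pos hv)).mp this

theorem PosSemidef.norm_lt_one_of_mem_spectrum {A : Matrix n n 𝕜} (hM : M.PosSemidef)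
    (hMA : (M - Aᴴ * M * A).PosDef) {μ : 𝕜} (hμ : μ ∈ spectrum 𝕜 A) : ‖μ‖ < 1 := by
  obtain ⟨v, hv, hAv⟩ := exists_mulVec_eq_smul_of_mem_spectrum hμ
  have := hM.seminorm_mulVec_lt hMA hv
  rw [hAv, map_smul_eq_mul] at this
  exact lt_of_mul_lt_mul_right (by rwa [one_mul]) (apply_nonneg _ _)

theorem sub_smul_mulVec_eq_zero_of_mul_self {K : Type*} [Field K] [CharZero K]
    {A : Matrix n n K} {μ : K} (hμ : μ ≠ 0)
    (hsq : ∀ u, (A * A - (μ * μ) • 1) *ᵥ ((A * A - (μ * μ) • 1) *ᵥ u) = 0 →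
      (A * A - (μ * μ) • 1) *ᵥ u = 0)
    {v : n → K} (hv : (A - μ • 1) *ᵥ ((A - μ • 1) *ᵥ v) = 0) : (A - μ • 1) *ᵥ v = 0 := by
  set w := (A - μ • 1) *ᵥ v
  have hfac : A * A - (μ * μ) • 1 = (A + μ • 1) * (A - μ • 1) := by
    simp only [mul_sub, add_mul, Matrix.mul_smul, Matrix.smul_mul, Matrix.mul_one, Matrix.one_mul,
      smul_smul]
    module
  have hcomm : (A - μ • 1) * (A + μ • 1) = (A + μ • 1) * (A - μ • 1) := by
    simp only [mul_add, sub_mul, add_mul, mul_sub, Matrix.mul_smul, Matrix.smul_mul,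
      Matrix.mul_one, Matrix.one_mul, smul_smul]
    module
  have hPw : (A + μ • 1) *ᵥ w = 0 := by
    have hsq' := hsq v (by
      simp only [hfac, ← mulVec_mulVec]
      rw [mulVec_mulVec _ (A - μ • 1), hcomm, ← mulVec_mulVec, hv, mulVec_zero, mulVec_zero])
    rwa [hfac, ← mulVec_mulVec] at hsq'
  have h2μw : (2 * μ) • w = 0 :=
    calc (2 * μ) • w = (A + μ • 1) *ᵥ w - (A - μ • 1) *ᵥ w := by
          simp only [add_mulVec, sub_mulVec, smul_mulVec, one_mulVec]
          module
      _ = 0 := by rw [hPw, hv, sub_zero]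
  exact (smul_eq_zero.mp h2μw).resolve_left (mul_ne_zero two_ne_zero hμ)

end Matrix

theorem stmt_10 (n : ℕ) (A Q X : Matrix (Fin n) (Fin n) ℂ)
    (hQ : Q.PosDef) (hQA : (Q - Aᴴ * Q * A).PosSemidef)
    (hX : X.PosDef) (heq : X + Aᴴ * X * A = Q) :
    (∀ μ ∈ spectrum ℂ A, ‖μ‖ ≤ 1) ∧
    (∀ μ ∈ spectrum ℂ A, ‖μ‖ = 1 →
      ∀ v : Fin n → ℂ, (A - μ • 1) *ᵥ ((A - μ • 1) *ᵥ v) = 0 →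
        (A - μ • 1) *ᵥ v = 0) ∧
    ((Q - Aᴴ * Q * A).PosDef → ∀ μ ∈ spectrum ℂ A, ‖μ‖ < 1) := by
  refine ⟨fun μ hμ => hQ.norm_le_one_of_mem_spectrum hQA hμ, fun μ _ hμ v hv => ?_,
    fun hQA' μ hμ => hQ.posSemidef.norm_lt_one_of_mem_spectrum hQA' hμ⟩
  have hXA2 : (X - (A * A)ᴴ * X * (A * A)).PosSemidef := by
    have hstein : X - star (A * A) * X * (A * A) = Q - star A * Q * A :=
      sub_star_mul_self_mul_mul_self heq
    rw [star_eq_conjTranspose, star_eq_conjTranspose] at hstein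
    rwa [hstein]
  have hμ2 : ‖μ * μ‖ = 1 := by rw [norm_mul, hμ, one_mul]
  exact sub_smul_mulVec_eq_zero_of_mul_self (norm_ne_zero_iff.mp (hμ ▸ one_ne_zero))
    (fun u hu => hX.sub_smul_mulVec_eq_zero_of_stein hXA2 hμ2 hu) hv
end

section
/- Let J = aI_n + N be a single n×n Jordan block with eigenvalue a satisfying |a| > 1 (N the nilpotent shift). If X is positive semidefinite and X − J*XJ is positive semidefinite, then X = 0. -/
/-!
Write `e_k` for the standard basis vectors, so that `J e_k = a e_k + e_{k-1}` (with `e_{-1} = 0`).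
By induction on `k`, `X e_k = 0`: if `X e_{k-1} = 0`, the Hermitian form of `Jᴴ X J` at `e_k`
is `|a|² X_kk`, so `X ⪰ Jᴴ X J` gives `(1 - |a|²) X_kk ≥ 0`, hence `X_kk = 0` as `X_kk ≥ 0`,
and a zero diagonal entry of a positive semidefinite matrix kills its column.
-/

open Matrix ComplexOrder

theorem Matrix.PosSemidef.mulVec_eq_zero_of_mulVec_eq_smul_add {ι 𝕜 : Type*} [Fintype ι]
    [RCLike 𝕜] {X J : Matrix ι ι 𝕜} (hX : X.PosSemidef) (hS : (X - Jᴴ * X * J).PosSemidef)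
    {a : 𝕜} (ha : 1 < ‖a‖) {v w : ι → 𝕜} (hv : J *ᵥ v = a • v + w) (hw : X *ᵥ w = 0) :
    X *ᵥ v = 0 := by
  set q := star v ⬝ᵥ X *ᵥ v
  have hwv : star w ⬝ᵥ X *ᵥ v = 0 := by
    rw [dotProduct_mulVec, ← hX.1.eq, ← star_mulVec, hw, star_zero, zero_dotProduct]
  have hJv : star (J *ᵥ v) ⬝ᵥ X *ᵥ (J *ᵥ v) = (‖a‖ : 𝕜) ^ 2 * q := by
    rw [hv, mulVec_add, hw, add_zero, mulVec_smul, star_add, add_dotProduct, dotProduct_smul,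
      dotProduct_smul, hwv, smul_zero, add_zero, star_smul, smul_dotProduct, smul_smul,
      smul_eq_mul, RCLike.star_def, RCLike.mul_conj]
  have hS' : 0 ≤ q - (‖a‖ : 𝕜) ^ 2 * q := by
    have := hS.dotProduct_mulVec_nonneg v
    rwa [sub_mulVec, dotProduct_sub, ← mulVec_mulVec, ← mulVec_mulVec,
      dotProduct_mulVec (star v) Jᴴ, ← star_mulVec, hJv] at this
  have hc : (0 : 𝕜) < (‖a‖ : 𝕜) ^ 2 - 1 := by
    have : (0 : ℝ) < ‖a‖ ^ 2 - 1 := by nlinarith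
    exact_mod_cast (RCLike.ofReal_pos (K := 𝕜)).mpr this
  have hcq : ((‖a‖ : 𝕜) ^ 2 - 1) * q = 0 := by
    refine le_antisymm ?_ (mul_nonneg hc.le (hX.dotProduct_mulVec_nonneg v))
    rw [← neg_nonneg]
    convert hS' using 1
    ring
  exact (hX.dotProduct_mulVec_zero_iff v).mp ((mul_eq_zero.mp hcq).resolve_left hc.ne')

theorem Matrix.mulVec_eq_zero_of_forall_mulVec_single {ι R : Type*} [Fintype ι] [DecidableEq ι]
    [Semiring R] {X : Matrix ι ι R} {v : ι → R}
    (h : ∀ j, v j ≠ 0 → X *ᵥ Pi.single j 1 = 0) : X *ᵥ v = 0 := by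
  ext i
  refine Finset.sum_eq_zero fun j _ => ?_
  by_cases hj : v j = 0
  · simp [hj]
  · have hXij : X i j = 0 := by simpa [mulVec_single] using congrFun (h j hj) i
    simp [hXij]

theorem lt_of_shift_mulVec_single_apply_ne_zero {R : Type*} [Semiring R] {n : ℕ} {j k : Fin n}
    (h : (of (fun i j : Fin n => if (i : ℕ) + 1 = (j : ℕ) then (1 : R) else 0) *ᵥ
      Pi.single k 1) j ≠ 0) :
    j < k := by
  simp only [mulVec_single, MulOpposite.op_one, Pi.smul_apply, col_apply, of_apply, smul_ite,
    one_smul, smul_zero, ne_eq, ite_eq_right_iff, Classical.not_imp] at h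
  rw [Fin.lt_def]
  omega

theorem stmt_11 (n : ℕ) (a : ℂ) (ha : 1 < ‖a‖)
    (J X : Matrix (Fin n) (Fin n) ℂ)
    (hJ : J = a • (1 : Matrix (Fin n) (Fin n) ℂ) +
      Matrix.of (fun i j : Fin n => if (i : ℕ) + 1 = (j : ℕ) then 1 else 0))
    (hX : X.PosSemidef) (hS : (X - Jᴴ * X * J).PosSemidef) :
    X = 0 := by
  have hcol : ∀ k, X *ᵥ Pi.single k 1 = 0 := by
    intro k
    induction k using WellFoundedLT.induction with
    | _ k ih =>
      have hJk : J *ᵥ Pi.single k 1 = a • Pi.single k 1 +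
          of (fun i j : Fin n => if (i : ℕ) + 1 = (j : ℕ) then 1 else 0) *ᵥ Pi.single k 1 := by
        rw [hJ, add_mulVec, smul_mulVec, one_mulVec]
      exact hX.mulVec_eq_zero_of_mulVec_eq_smul_add hS ha hJk <|
        mulVec_eq_zero_of_forall_mulVec_single fun j hj =>
          ih j (lt_of_shift_mulVec_single_apply_ne_zero hj)
  ext i k
  simpa [mulVec_single] using congrFun (hcol k) i
end

section
/- Let J = aI_n + N be a single n×n Jordan block with |a| = 1 (N the nilpotent superdiagonal shift, n ≥ 2). If X is positive semidefinite and X − J*XJ is positive semidefinite, then X − J*XJ = 0 and X = x·e_n e_nᵀ for some real x ≥ 0, where e_n is the last standard basis vector. -/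
/-!
Write `J = a • 1 + N` with `N` the superdiagonal shift. If the columns of `X` before column `m`
vanish, then so does column `m` of `X * N`, and `|a| = 1` turns column `m` of `X - Jᴴ * X * J`
into `-a • (Nᴴ * X)`. Its diagonal entry is `0`, so positive semidefiniteness kills that whole
column, and in particular the entry `-a * X m m` just below the diagonal. Hence `X m m = 0`, and
column `m` of `X` vanishes as well. Induction clears every column but the last; then
`X * N = Nᴴ * X = 0`, which makes `X - Jᴴ * X * J` vanish.
-/

open Matrix ComplexOrder

section Stein
variable {ι R : Type*} [Fintype ι] [CommRing R] [StarRing R]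

theorem sub_conjTranspose_mul_mul_apply_of_mul_col_eq_zero [DecidableEq ι]
    {J X N : Matrix ι ι R} {a : R} (ha : star a * a = 1) (hJ : J = a • 1 + N) {m : ι}
    (hXN : ∀ k, (X * N) k m = 0) (i : ι) :
    (X - Jᴴ * X * J) i m = -(a * (Nᴴ * X) i m) := by
  have hexpand : Jᴴ * X * J = X + a • (Nᴴ * X) + Jᴴ * (X * N) := by
    subst hJ
    simp only [conjTranspose_add, conjTranspose_smul, conjTranspose_one, Matrix.add_mul,
      Matrix.mul_add, smul_mul, Matrix.mul_smul, Matrix.one_mul, Matrix.mul_one, smul_add,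
      smul_smul, mul_comm a (star a), ha, one_smul, Matrix.mul_assoc]
  have hJXN : (Jᴴ * (X * N)) i m = 0 :=
    Finset.sum_eq_zero fun k _ => by simp only [hXN, mul_zero]
  rw [hexpand, Matrix.sub_apply, Matrix.add_apply, Matrix.add_apply, hJXN, Matrix.smul_apply,
    smul_eq_mul]
  ring

end Stein

section PosSemidef
variable {𝕜 : Type*} [RCLike 𝕜] {ι : Type*} [Fintype ι]

theorem Matrix.PosSemidef.apply_eq_zero_of_diag_eq_zero {A : Matrix ι ι 𝕜} (hA : A.PosSemidef)
    {i : ι} (h : A i i = 0) (j : ι) : A j i = 0 := by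
  classical
  have := (hA.dotProduct_mulVec_zero_iff (Pi.single i 1)).mp (by simp [mulVec_single, h])
  simpa [mulVec_single] using congrFun this j

end PosSemidef

def shiftMatrix (n : ℕ) (R : Type*) [Zero R] [One R] : Matrix (Fin n) (Fin n) R :=
  of fun i j => if (i : ℕ) + 1 = j then 1 else 0

section shiftMatrix
variable {n : ℕ} {R : Type*} [Semiring R]

theorem mul_shiftMatrix_apply_eq_zero {X : Matrix (Fin n) (Fin n) R} {k j : Fin n}
    (hX : ∀ l : Fin n, (l : ℕ) < j → X k l = 0) : (X * shiftMatrix n R) k j = 0 := by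
  refine (mul_apply ..).trans (Finset.sum_eq_zero fun l _ => ?_)
  by_cases hl : (l : ℕ) + 1 = j
  · rw [hX l (by omega), zero_mul]
  · simp [shiftMatrix, hl]

theorem conjTranspose_shiftMatrix_mul_apply_eq_zero [StarRing R] {X : Matrix (Fin n) (Fin n) R}
    {i j : Fin n} (hX : ∀ l : Fin n, (l : ℕ) < i → X l j = 0) :
    ((shiftMatrix n R)ᴴ * X) i j = 0 := by
  refine (mul_apply ..).trans (Finset.sum_eq_zero fun l _ => ?_)
  by_cases hl : (l : ℕ) + 1 = i
  · rw [hX l (by omega), mul_zero]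
  · simp [shiftMatrix, hl]

theorem conjTranspose_shiftMatrix_mul_apply_succ [StarRing R] (X : Matrix (Fin n) (Fin n) R)
    {i : Fin n} (hi : (i : ℕ) + 1 < n) (j : Fin n) :
    ((shiftMatrix n R)ᴴ * X) ⟨i + 1, hi⟩ j = X i j := by
  rw [mul_apply, Finset.sum_eq_single i]
  · simp [shiftMatrix]
  · intro l _ hl
    simp [shiftMatrix, Fin.val_ne_of_ne hl]
  · simp

end shiftMatrix

section JordanBlock
variable {𝕜 : Type*} [RCLike 𝕜] {n : ℕ} {a : 𝕜} {J X : Matrix (Fin n) (Fin n) 𝕜}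

theorem col_eq_zero_of_stein_posSemidef (ha : star a * a = 1)
    (hJ : J = a • 1 + shiftMatrix n 𝕜) (hX : X.PosSemidef) (hS : (X - Jᴴ * X * J).PosSemidef)
    {m : Fin n} (hm : (m : ℕ) + 1 < n) (hcols : ∀ i l : Fin n, (l : ℕ) < m → X i l = 0)
    (i : Fin n) : X i m = 0 := by
  have hS_col : ∀ k, (X - Jᴴ * X * J) k m = -(a * ((shiftMatrix n 𝕜)ᴴ * X) k m) :=
    sub_conjTranspose_mul_mul_apply_of_mul_col_eq_zero ha hJ
      fun k => mul_shiftMatrix_apply_eq_zero fun l hl => hcols k l hl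
  have hS_diag : (X - Jᴴ * X * J) m m = 0 := by
    rw [hS_col, conjTranspose_shiftMatrix_mul_apply_eq_zero
      fun l hl => by rw [← hX.isHermitian.apply, hcols m l hl, star_zero], mul_zero, neg_zero]
  have hX_diag : X m m = 0 := by
    have := hS.apply_eq_zero_of_diag_eq_zero hS_diag ⟨m + 1, hm⟩
    rw [hS_col, conjTranspose_shiftMatrix_mul_apply_succ, neg_eq_zero] at this
    exact (mul_eq_zero.mp this).resolve_left fun h => by simp [h] at ha
  exact hX.apply_eq_zero_of_diag_eq_zero hX_diag i

theorem apply_eq_zero_of_stein_posSemidef (ha : star a * a = 1)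
    (hJ : J = a • 1 + shiftMatrix n 𝕜) (hX : X.PosSemidef) (hS : (X - Jᴴ * X * J).PosSemidef) :
    ∀ i j : Fin n, (j : ℕ) < n - 1 → X i j = 0 := by
  suffices ∀ m ≤ n - 1, ∀ i j : Fin n, (j : ℕ) < m → X i j = 0 from this _ le_rfl
  intro m
  induction m with
  | zero => intro _ _ _ h; omega
  | succ m ih =>
    intro hm i j hj
    rcases Nat.lt_succ_iff_lt_or_eq.mp hj with hj | hj
    · exact ih (by omega) i j hj
    · subst hj
      exact col_eq_zero_of_stein_posSemidef ha hJ hX hS (by omega) (ih (by omega)) i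

end JordanBlock

theorem stmt_12 (n : ℕ) (hn : 2 ≤ n) (a : ℂ) (ha : ‖a‖ = 1)
    (J X : Matrix (Fin n) (Fin n) ℂ)
    (hJ : J = a • (1 : Matrix (Fin n) (Fin n) ℂ) +
      Matrix.of (fun i j : Fin n => if (i : ℕ) + 1 = (j : ℕ) then 1 else 0))
    (hX : X.PosSemidef) (hS : (X - Jᴴ * X * J).PosSemidef) :
    X - Jᴴ * X * J = 0 ∧
    ∃ x : ℝ, 0 ≤ x ∧
      ∀ i j : Fin n, X i j =
        if (i : ℕ) = n - 1 ∧ (j : ℕ) = n - 1 then (x : ℂ) else 0 := by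
  replace hJ : J = a • 1 + shiftMatrix n ℂ := hJ
  have ha' : star a * a = 1 := by rw [← starRingEnd_apply, Complex.conj_mul', ha]; norm_num
  have hcols := apply_eq_zero_of_stein_posSemidef ha' hJ hX hS
  have hrows : ∀ i j : Fin n, (i : ℕ) < n - 1 → X i j = 0 := fun i j hi => by
    rw [← hX.isHermitian.apply, hcols j i hi, star_zero]
  refine ⟨?_, ?_⟩
  · ext i j
    rw [sub_conjTranspose_mul_mul_apply_of_mul_col_eq_zero ha' hJ
        (fun k => mul_shiftMatrix_apply_eq_zero fun l hl => hcols k l (by omega)),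
      conjTranspose_shiftMatrix_mul_apply_eq_zero fun l hl => hrows l j (by omega),
      mul_zero, neg_zero, Matrix.zero_apply]
  · let last : Fin n := ⟨n - 1, by omega⟩
    obtain ⟨hlast_re, hlast_im⟩ := Complex.nonneg_iff.mp (hX.diag_nonneg (i := last))
    refine ⟨(X last last).re, hlast_re, fun i j => ?_⟩
    split_ifs with h
    · obtain rfl : i = last := Fin.ext h.1
      obtain rfl : j = last := Fin.ext h.2
      exact Complex.ext rfl (by simp [← hlast_im])
    · rcases not_and_or.mp h with hi | hj
      · exact hrows i j (by omega)
      · exact hcols i j (by omega)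
end

section
/- Let J be any n×n matrix in Jordan canonical form all of whose eigenvalues have modulus ≥ 1. If X ≥ 0 and X − J*XJ ≥ 0, then X − J*XJ = 0. In other words, the Stein operator S_J(X) = X − J*XJ maps no nonzero positive semidefinite matrix to a nonzero positive semidefinite matrix when all eigenvalues of J lie outside the open unit disk. -/
/-!
Write `S = X - Jᴴ X J = Bᴴ B`. Telescoping gives `∑_{m<k} (Jᵐ)ᴴ S Jᵐ = X - (Jᵏ)ᴴ X Jᵏ ≤ X`.
Since `J` is upper triangular, once the columns of `B` before `j` are known to vanish, column `j`
of `B Jᵐ` is `(J j j)ᵐ` times column `j` of `B`; as `|J j j| ≥ 1`, the `j`-th diagonal entry of the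
`m`-th summand is at least `S j j`, so `k * Re (S j j) ≤ Re (X j j)` for every `k` and `S j j = 0`.
Hence column `j` of `B` vanishes, and by induction `B = 0`.
-/

open Matrix ComplexOrder

theorem sum_range_star_pow_mul_sub_mul_pow {R : Type*} [Ring R] [StarRing R] (a x : R) (k : ℕ) :
    ∑ m ∈ Finset.range k, star (a ^ m) * (x - star a * x * a) * a ^ m
      = x - star (a ^ k) * x * a ^ k := by
  induction k with
  | zero => simp
  | succ k ih =>
    rw [Finset.sum_range_succ, ih, pow_succ', star_mul]
    noncomm_ring

theorem nonpos_of_forall_natCast_mul_le {c C : ℝ} (h : ∀ k : ℕ, k * c ≤ C) : c ≤ 0 := by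
  by_contra! hc
  obtain ⟨k, hk⟩ := exists_nat_gt (C / c)
  have := h k
  rw [div_lt_iff₀ hc] at hk
  linarith

namespace Matrix

variable {n o : Type*}

theorem conjTranspose_mul_self_apply_self_re [Fintype o] (B : Matrix o n ℂ) (j : n) :
    ((Bᴴ * B) j j).re = ∑ r, Complex.normSq (B r j) := by
  simp [mul_apply, Complex.re_sum, Complex.normSq_apply, Complex.mul_re]

theorem PosSemidef.sum_range_conjTranspose_pow_mul_stein_mul_pow_apply_self_re_le
    [Fintype n] [DecidableEq n] {J X : Matrix n n ℂ} (hX : X.PosSemidef) (k : ℕ) (j : n) :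
    ∑ m ∈ Finset.range k, (((J ^ m)ᴴ * (X - Jᴴ * X * J) * J ^ m) j j).re ≤ (X j j).re := by
  have hsum := sum_range_star_pow_mul_sub_mul_pow J X k
  simp only [star_eq_conjTranspose] at hsum
  rw [← Complex.re_sum, ← sum_apply, hsum, sub_apply, Complex.sub_re, sub_le_self_iff]
  exact Complex.nonneg_iff.mp (hX.conjTranspose_mul_mul_same (J ^ k)).diag_nonneg |>.1

variable [Fintype n] [LinearOrder n]

section Semiring

variable {R : Type*} [Semiring R] {J : Matrix n n R}

theorem IsUpperTriangular.pow_apply_self [DecidableEq n] (hJ : J.IsUpperTriangular) (m : ℕ)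
    (i : n) : (J ^ m) i i = J i i ^ m := by
  induction m with
  | zero => simp
  | succ m ih =>
    rw [pow_succ, mul_apply, Finset.sum_eq_single i, ih, pow_succ]
    · intro k _ hki
      rcases hki.lt_or_gt with hlt | hgt
      · rw [(hJ.pow m) hlt, zero_mul]
      · rw [hJ hgt, mul_zero]
    · simp

theorem IsUpperTriangular.mul_pow_apply_of_forall_lt [DecidableEq n] (hJ : J.IsUpperTriangular)
    {B : Matrix o n R} {j : n} (hB : ∀ l < j, ∀ r, B r l = 0) (m : ℕ) (r : o) :
    (B * J ^ m) r j = B r j * J j j ^ m := by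
  rw [mul_apply, Finset.sum_eq_single j, hJ.pow_apply_self]
  · intro l _ hlj
    rcases hlj.lt_or_gt with hlt | hgt
    · rw [hB l hlt r, zero_mul]
    · rw [(hJ.pow m) hgt, mul_zero]
  · simp

end Semiring

theorem IsUpperTriangular.stein_eq_zero_of_posSemidef {J X : Matrix n n ℂ}
    (hJ : J.IsUpperTriangular) (hdiag : ∀ i, 1 ≤ ‖J i i‖) (hX : X.PosSemidef)
    (hS : (X - Jᴴ * X * J).PosSemidef) : X - Jᴴ * X * J = 0 := by
  obtain ⟨B, hB⟩ : ∃ B : Matrix n n ℂ, X - Jᴴ * X * J = Bᴴ * B := by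
    open scoped MatrixOrder in exact CStarAlgebra.nonneg_iff_eq_star_mul_self.mp hS.nonneg
  suffices hcol : ∀ j r, B r j = 0 by
    rw [hB, show B = 0 from ext fun r j => hcol j r, mul_zero]
  intro j
  induction j using WellFoundedLT.induction with
  | _ j ih =>
    set c := ∑ r, Complex.normSq (B r j)
    have hsummand : ∀ m : ℕ, c ≤ (((J ^ m)ᴴ * (X - Jᴴ * X * J) * J ^ m) j j).re := fun m => by
      rw [hB, show (J ^ m)ᴴ * (Bᴴ * B) * J ^ m = (B * J ^ m)ᴴ * (B * J ^ m) by
        simp only [conjTranspose_mul, Matrix.mul_assoc], conjTranspose_mul_self_apply_self_re]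
      simp_rw [hJ.mul_pow_apply_of_forall_lt ih, Complex.normSq_mul, ← Finset.sum_mul]
      refine le_mul_of_one_le_right (Finset.sum_nonneg fun _ _ => Complex.normSq_nonneg _) ?_
      rw [map_pow, Complex.normSq_eq_norm_sq]
      exact one_le_pow₀ (one_le_pow₀ (hdiag j))
    have hc : c ≤ 0 := nonpos_of_forall_natCast_mul_le fun k => by
      simpa using (Finset.sum_le_sum fun m _ => hsummand m).trans
        (hX.sum_range_conjTranspose_pow_mul_stein_mul_pow_apply_self_re_le k j)
    have hzero := (Finset.sum_eq_zero_iff_of_nonneg fun r _ => Complex.normSq_nonneg (B r j)).mp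
      (hc.antisymm (Finset.sum_nonneg fun r _ => Complex.normSq_nonneg _))
    exact fun r => Complex.normSq_eq_zero.mp (hzero r (Finset.mem_univ r))

end Matrix

theorem stmt_13_general (n : ℕ) (J X : Matrix (Fin n) (Fin n) ℂ)
    (hband : ∀ i j : Fin n, (j : ℕ) ≠ (i : ℕ) ∧ (j : ℕ) ≠ (i : ℕ) + 1 → J i j = 0)
    (hdiag : ∀ i : Fin n, 1 ≤ ‖J i i‖)
    (hX : X.PosSemidef) (hS : (X - Jᴴ * X * J).PosSemidef) :
    X - Jᴴ * X * J = 0 :=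
  IsUpperTriangular.stein_eq_zero_of_posSemidef
    (fun i j hji => hband i j ⟨by simp at hji; omega, by simp at hji; omega⟩) hdiag hX hS

theorem stmt_13 (n : ℕ) (J X : Matrix (Fin n) (Fin n) ℂ)
    (hband : ∀ i j : Fin n, (j : ℕ) ≠ (i : ℕ) ∧ (j : ℕ) ≠ (i : ℕ) + 1 → J i j = 0)
    (hdiag : ∀ i : Fin n, 1 ≤ ‖J i i‖)
    (hsup : ∀ i j : Fin n, (j : ℕ) = (i : ℕ) + 1 →
      J i j = 0 ∨ (J i j = 1 ∧ J i i = J j j))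
    (hX : X.PosSemidef) (hS : (X - Jᴴ * X * J).PosSemidef) :
    X - Jᴴ * X * J = 0 :=
  stmt_13_general n J X hband hdiag hX hS
end

section
/- Let A be n×n complex, G, H positive semidefinite, and X a Hermitian solution of the DARE X = H + A*X(I + GX)⁻¹A with X in the set {Y ≥ 0 : Y ≥ R_d(Y)}. Then, with T_X = (I + GX)⁻¹A, the matrix X − T_X* X T_X is positive semidefinite; explicitly X − T_X*XT_X ≥ H + T_X*XGXT_X ≥ 0. -/
/-!
Since `A = (1 + G X) T` and `Aᴴ = Tᴴ (1 + X G)` for the closed-loop matrix `T = (1 + G X)⁻¹ A`,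
the Riccati term equals `Tᴴ (X + X G X) T`, so the DARE says exactly
`X - Tᴴ X T = H + Tᴴ (X G X) T`, a sum of positive semidefinite matrices.
-/

open Matrix ComplexOrder

namespace Matrix

variable {n : Type*} [Fintype n] [DecidableEq n]

open scoped MatrixOrder in
/-- Writing `X = Bᴴ * B`, Sylvester's determinant identity turns `det (1 + G * X)` into
`det (1 + B * G * Bᴴ)`, the determinant of a positive definite matrix. -/
theorem PosSemidef.isUnit_det_one_add_mul {𝕜 : Type*} [RCLike 𝕜] {G X : Matrix n n 𝕜}
    (hG : G.PosSemidef) (hX : X.PosSemidef) : IsUnit (1 + G * X).det := by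
  obtain ⟨B, rfl⟩ := CStarAlgebra.nonneg_iff_eq_star_mul_self.mp hX.nonneg
  rw [star_eq_conjTranspose, ← mul_assoc, det_one_add_mul_comm, ← mul_assoc]
  exact (PosDef.one.add_posSemidef (hG.mul_mul_conjTranspose_same B)).det_pos.ne'.isUnit

section Riccati

variable {R : Type*} [CommRing R] [StarRing R] {A G X T : Matrix n n R}

theorem conjTranspose_mul_mul_inv_mul_eq (hG : G.IsHermitian) (hX : X.IsHermitian)
    (hdet : IsUnit (1 + G * X).det) (hA : A = (1 + G * X) * T) :
    Aᴴ * X * (1 + G * X)⁻¹ * A = Tᴴ * X * T + Tᴴ * X * G * X * T := by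
  have hAH : Aᴴ = Tᴴ * (1 + X * G) := by
    rw [hA, conjTranspose_mul, conjTranspose_add, conjTranspose_one, conjTranspose_mul,
      hG.eq, hX.eq]
  have hinv : (1 + G * X)⁻¹ * A = T := by
    rw [hA, ← mul_assoc, nonsing_inv_mul _ hdet, one_mul]
  calc Aᴴ * X * (1 + G * X)⁻¹ * A = Tᴴ * (X + X * G * X) * ((1 + G * X)⁻¹ * A) := by
        rw [hAH]; noncomm_ring
    _ = Tᴴ * X * T + Tᴴ * X * G * X * T := by rw [hinv]; noncomm_ring

theorem sub_conjTranspose_mul_mul_eq_of_riccati {H : Matrix n n R} (hG : G.IsHermitian)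
    (hX : X.IsHermitian) (hdet : IsUnit (1 + G * X).det)
    (heq : X = H + Aᴴ * X * (1 + G * X)⁻¹ * A) :
    X - ((1 + G * X)⁻¹ * A)ᴴ * X * ((1 + G * X)⁻¹ * A) =
      H + ((1 + G * X)⁻¹ * A)ᴴ * X * G * X * ((1 + G * X)⁻¹ * A) := by
  have hA : A = (1 + G * X) * ((1 + G * X)⁻¹ * A) := by
    rw [← mul_assoc, mul_nonsing_inv _ hdet, one_mul]
  rw [sub_eq_iff_eq_add]
  nth_rewrite 1 [heq]
  rw [conjTranspose_mul_mul_inv_mul_eq hG hX hdet hA]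
  abel

end Riccati

end Matrix

theorem stmt_14 (n : ℕ) (A G H X : Matrix (Fin n) (Fin n) ℂ)
    (hG : G.PosSemidef) (hH : H.PosSemidef)
    (hX : X.PosSemidef)
    (heq : X = H + Aᴴ * X * (1 + G * X)⁻¹ * A) :
    (H + ((1 + G * X)⁻¹ * A)ᴴ * X * G * X * ((1 + G * X)⁻¹ * A)).PosSemidef ∧
    ((X - ((1 + G * X)⁻¹ * A)ᴴ * X * ((1 + G * X)⁻¹ * A)) -
      (H + ((1 + G * X)⁻¹ * A)ᴴ * X * G * X * ((1 + G * X)⁻¹ * A))).PosSemidef ∧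
    (X - ((1 + G * X)⁻¹ * A)ᴴ * X * ((1 + G * X)⁻¹ * A)).PosSemidef := by
  set T := (1 + G * X)⁻¹ * A
  have hdiff : X - Tᴴ * X * T = H + Tᴴ * X * G * X * T :=
    sub_conjTranspose_mul_mul_eq_of_riccati hG.isHermitian hX.isHermitian
      (hG.isUnit_det_one_add_mul hX) heq
  have hXGX : (X * G * X).PosSemidef := by
    simpa only [hX.isHermitian.eq] using hG.conjTranspose_mul_mul_same X
  have hrhs : (H + Tᴴ * X * G * X * T).PosSemidef := by
    simpa only [Matrix.mul_assoc] using hH.add (hXGX.conjTranspose_mul_mul_same T)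
  refine ⟨hrhs, ?_, hdiff ▸ hrhs⟩
  rw [hdiff, sub_self]
  exact .zero
end

section
/- Let g ≥ 0, h ≥ 0, a ≥ 0 be real numbers and suppose either g > 0, or (g = 0 and a < 1). Then the quadratic inequality g x² + (1 − a − hg)x − h ≥ 0 has a nonnegative real solution x_c, and this x_c satisfies x_c ≥ h + (a x_c)/(1 + g x_c). -/
open Matrix ComplexOrder

/-
The fixed-point defect factors through the quadratic:
`x - (h + a x / (1 + g x)) = (g x² + (1 - a - h g) x - h) / (1 + g x)`,
and the denominator is positive for `g, x ≥ 0`. So any nonnegative root of the quadratic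
works; for `g > 0` take the larger root, which is nonnegative because its discriminant
`b² + 4 g h` is at least `b²`, and for `g = 0` the equation is linear with slope `1 - a > 0`.
-/

lemma exists_nonneg_root_of_pos {g h : ℝ} (b : ℝ) (hg : 0 < g) (hh : 0 ≤ h) :
    ∃ x : ℝ, 0 ≤ x ∧ g * x ^ 2 + b * x - h = 0 := by
  set s := √(b ^ 2 + 4 * g * h)
  have hdiscrim : discrim g b (-h) = s * s := by
    rw [Real.mul_self_sqrt (by positivity), discrim]
    ring
  have hbs : b ≤ s := (le_abs_self b).trans <| by
    rw [← Real.sqrt_sq_eq_abs]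
    exact Real.sqrt_le_sqrt (by nlinarith)
  refine ⟨(-b + s) / (2 * g), div_nonneg (by linarith) (by positivity), ?_⟩
  have hroot := (quadratic_eq_zero_iff hg.ne' hdiscrim _).mpr (Or.inl rfl)
  linear_combination hroot

lemma exists_nonneg_root {g b h : ℝ} (hg : 0 ≤ g) (hh : 0 ≤ h) (hgb : 0 < g ∨ 0 < b) :
    ∃ x : ℝ, 0 ≤ x ∧ g * x ^ 2 + b * x - h = 0 := by
  rcases hgb with hg | hb
  · exact exists_nonneg_root_of_pos b hg hh
  · obtain rfl | hg := hg.eq_or_lt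
    · exact ⟨h / b, div_nonneg hh hb.le, by field_simp; ring⟩
    · exact exists_nonneg_root_of_pos b hg hh

lemma add_mul_div_one_add_mul_le {g h a x : ℝ} (hg : 0 ≤ g) (hx : 0 ≤ x)
    (hq : 0 ≤ g * x ^ 2 + (1 - a - h * g) * x - h) :
    h + a * x / (1 + g * x) ≤ x := by
  have hden : 0 < 1 + g * x := by positivity
  have hdefect : x - (h + a * x / (1 + g * x)) =
      (g * x ^ 2 + (1 - a - h * g) * x - h) / (1 + g * x) := by
    field_simp
    ring
  rw [← sub_nonneg, hdefect]
  positivity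

theorem stmt_16_general (g h a : ℝ) (hg : 0 ≤ g) (hh : 0 ≤ h)
    (hcase : 0 < g ∨ (g = 0 ∧ a < 1)) :
    ∃ x : ℝ, 0 ≤ x ∧ 0 ≤ g * x ^ 2 + (1 - a - h * g) * x - h ∧
      h + a * x / (1 + g * x) ≤ x := by
  have hslope : 0 < g ∨ 0 < 1 - a - h * g := by
    rcases hcase with hg | ⟨rfl, ha⟩
    · exact Or.inl hg
    · exact Or.inr (by linarith)
  obtain ⟨x, hx, hroot⟩ := exists_nonneg_root hg hh hslope
  exact ⟨x, hx, hroot.ge, add_mul_div_one_add_mul_le hg hx hroot.ge⟩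

theorem stmt_16 (g h a : ℝ) (hg : 0 ≤ g) (hh : 0 ≤ h) (ha : 0 ≤ a)
    (hcase : 0 < g ∨ (g = 0 ∧ a < 1)) :
    ∃ x : ℝ, 0 ≤ x ∧ 0 ≤ g * x ^ 2 + (1 - a - h * g) * x - h ∧
      h + a * x / (1 + g * x) ≤ x :=
  stmt_16_general g h a hg hh hcase
end

section
/- Let A be n×n with ρ(A) < 1, G, H ≥ 0, and define R_d(X) = H + A*X(I + GX)⁻¹A and the Stein operator S_A(X) = X − A*XA. Then the set {X ≥ 0 : S_A(X) ≥ H} is nonempty, and for any X with X ≤ R_d(X) one has S_A(X) ≤ H; consequently every element of {X ≥ 0 : S_A(X) ≥ H} is an upper bound (in the Loewner order) for the set {X ≥ 0 : X ≤ R_d(X)}. -/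
/-!
Since every eigenvalue of `A` has modulus `< 1`, Gelfand's formula gives `Aᵏ → 0`. Telescoping,
`W - (Aᴺ)ᴴ W Aᴺ = ∑_{k<N} (Aᵏ)ᴴ S_A(W) Aᵏ`; letting `N → ∞`, `S_A(W) ≥ 0` forces `W ≥ 0`, and
`S_A(W) = 0` forces `W = 0`. So `S_A` is bijective, and the preimage of `H` is a positive
semidefinite solution of `S_A(X) = H`. Writing `G = BᴴB`, the Woodbury identity gives
`X - X(I + GX)⁻¹ = XBᴴ(I + BXBᴴ)⁻¹BX ≥ 0`, hence `H - S_A(X) ≥ R_d(X) - X`. Finally, for `Z, X` as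
in the last claim, `S_A(Z - X) = (S_A(Z) - H) + (H - S_A(X)) ≥ 0`, so `Z ≥ X`.
-/
open Matrix ComplexOrder Filter Topology

theorem tendsto_pow_atTop_nhds_zero_of_spectralRadius_lt_one {A : Type*} [NormedRing A]
    [NormedAlgebra ℂ A] [CompleteSpace A] {a : A} (ha : spectralRadius ℂ a < 1) :
    Tendsto (a ^ ·) atTop (𝓝 0) := by
  obtain ⟨q, hrq, hq1⟩ := ENNReal.lt_iff_exists_nnreal_btwn.mp ha
  have hev : ∀ᶠ k : ℕ in atTop, ‖a ^ k‖ ≤ (q : ℝ) ^ k := by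
    filter_upwards [eventually_ge_atTop 1,
      (spectrum.pow_norm_pow_one_div_tendsto_nhds_spectralRadius a).eventually_lt_const hrq]
      with k hk1 hk
    rw [ENNReal.ofReal_lt_iff_lt_toReal (by positivity) (by simp), ENNReal.coe_toReal, one_div,
      Real.rpow_inv_lt_iff_of_pos (norm_nonneg _) q.coe_nonneg (by positivity)] at hk
    exact_mod_cast hk.le
  refine tendsto_zero_iff_norm_tendsto_zero.mpr <|
    squeeze_zero' (.of_forall fun k => norm_nonneg _) hev ?_
  exact tendsto_pow_atTop_nhds_zero_of_lt_one q.coe_nonneg (by exact_mod_cast hq1)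

theorem tendsto_pow_atTop_nhds_zero_of_forall_norm_lt_one {A : Type*} [NormedRing A]
    [NormedAlgebra ℂ A] [CompleteSpace A] {a : A} (ha : ∀ μ ∈ spectrum ℂ a, ‖μ‖ < 1) :
    Tendsto (a ^ ·) atTop (𝓝 0) := by
  rcases subsingleton_or_nontrivial A with hA | hA
  · exact tendsto_const_nhds.congr fun _ => Subsingleton.elim _ _
  · refine tendsto_pow_atTop_nhds_zero_of_spectralRadius_lt_one ?_
    simpa using spectrum.spectralRadius_lt_of_forall_lt a (r := 1) fun z hz => by
      simpa [← NNReal.coe_lt_coe] using ha z hz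

namespace Matrix

section Algebraic

variable {n R : Type*} [Fintype n] [DecidableEq n] [CommRing R] [StarRing R]

def steinOp (A : Matrix n n R) : Matrix n n R →ₗ[R] Matrix n n R :=
  LinearMap.id - (LinearMap.mulRight R A).comp (LinearMap.mulLeft R Aᴴ)

@[simp]
lemma steinOp_apply (A X : Matrix n n R) : steinOp A X = X - Aᴴ * X * A := rfl

lemma sub_conjTranspose_pow_mul_mul_pow_eq_sum (A W : Matrix n n R) (N : ℕ) :
    W - (A ^ N)ᴴ * W * A ^ N = ∑ k ∈ Finset.range N, (A ^ k)ᴴ * steinOp A W * A ^ k := by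
  induction N with
  | zero => simp
  | succ N ih =>
    rw [Finset.sum_range_succ, ← ih, steinOp_apply, pow_succ', conjTranspose_mul]
    noncomm_ring

lemma sub_mul_inv_one_add_mul_eq (X B : Matrix n n R) (hK : IsUnit (1 + B * X * Bᴴ).det) :
    X - X * (1 + Bᴴ * B * X)⁻¹ = X * Bᴴ * (1 + B * X * Bᴴ)⁻¹ * (B * X) := by
  set K := 1 + B * X * Bᴴ
  have hinv : (1 + Bᴴ * B * X)⁻¹ = 1 - Bᴴ * K⁻¹ * (B * X) := by
    refine inv_eq_right_inv ?_
    calc (1 + Bᴴ * B * X) * (1 - Bᴴ * K⁻¹ * (B * X))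
        = 1 + Bᴴ * (B * X) - Bᴴ * (K * K⁻¹) * (B * X) := by simp only [K]; noncomm_ring
      _ = 1 := by rw [mul_nonsing_inv K hK]; noncomm_ring
  rw [hinv]
  noncomm_ring

end Algebraic

variable {n 𝕜 : Type*} [Fintype n] [DecidableEq n] [RCLike 𝕜]

lemma tendsto_conjTranspose_pow_mul_mul_pow {A : Matrix n n 𝕜}
    (hA : Tendsto (A ^ ·) atTop (𝓝 0)) (W : Matrix n n 𝕜) :
    Tendsto (fun N => (A ^ N)ᴴ * W * A ^ N) atTop (𝓝 0) := by
  simpa [star_eq_conjTranspose] using (hA.star.mul_const W).mul hA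

lemma steinOp_injective {A : Matrix n n 𝕜} (hA : Tendsto (A ^ ·) atTop (𝓝 0)) :
    Function.Injective (steinOp A) := by
  refine (injective_iff_map_eq_zero _).mpr fun W hW => ?_
  have hfix : ∀ N, (A ^ N)ᴴ * W * A ^ N = W := fun N => by
    simpa [hW, sub_eq_zero, eq_comm] using sub_conjTranspose_pow_mul_mul_pow_eq_sum A W N
  exact tendsto_nhds_unique (tendsto_const_nhds.congr fun N => (hfix N).symm)
    (tendsto_conjTranspose_pow_mul_mul_pow hA W)

lemma steinOp_surjective {A : Matrix n n 𝕜} (hA : Tendsto (A ^ ·) atTop (𝓝 0)) :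
    Function.Surjective (steinOp A) :=
  LinearMap.injective_iff_surjective.mp (steinOp_injective hA)

open scoped MatrixOrder Matrix.Norms.L2Operator in
lemma posSemidef_of_posSemidef_steinOp {A W : Matrix n n ℂ}
    (hA : Tendsto (A ^ ·) atTop (𝓝 0)) (hW : (steinOp A W).PosSemidef) : W.PosSemidef := by
  have hpsd : ∀ N, (W - (A ^ N)ᴴ * W * A ^ N).PosSemidef := fun N => by
    rw [sub_conjTranspose_pow_mul_mul_pow_eq_sum]
    exact posSemidef_sum _ fun k _ => hW.conjTranspose_mul_mul_same _
  have hlim : Tendsto (fun N => W - (A ^ N)ᴴ * W * A ^ N) atTop (𝓝 W) := by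
    simpa using tendsto_const_nhds.sub (tendsto_conjTranspose_pow_mul_mul_pow hA W)
  exact nonneg_iff_posSemidef.mp <| ge_of_tendsto' hlim fun N => (hpsd N).nonneg

lemma exists_posSemidef_steinOp_eq {A H : Matrix n n ℂ}
    (hA : Tendsto (A ^ ·) atTop (𝓝 0)) (hH : H.PosSemidef) :
    ∃ X : Matrix n n ℂ, X.PosSemidef ∧ steinOp A X = H := by
  obtain ⟨X, hX⟩ := steinOp_surjective hA H
  exact ⟨X, posSemidef_of_posSemidef_steinOp hA (hX ▸ hH), hX⟩

open scoped MatrixOrder Matrix.Norms.L2Operator in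
lemma PosSemidef.sub_mul_inv_one_add_mul {X G : Matrix n n ℂ} (hX : X.PosSemidef)
    (hG : G.PosSemidef) : (X - X * (1 + G * X)⁻¹).PosSemidef := by
  obtain ⟨B, rfl⟩ := CStarAlgebra.nonneg_iff_eq_star_mul_self.mp hG.nonneg
  have hK : (1 + B * X * Bᴴ).PosDef := PosDef.one.add_posSemidef (hX.mul_mul_conjTranspose_same B)
  rw [star_eq_conjTranspose,
    sub_mul_inv_one_add_mul_eq X B ((isUnit_iff_isUnit_det _).mp hK.isUnit)]
  simpa [hX.isHermitian.eq, Matrix.mul_assoc] using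
    hK.posSemidef.inv.conjTranspose_mul_mul_same (B * X)

lemma posSemidef_sub_steinOp_of_posSemidef_riccati_sub {A G H X : Matrix n n ℂ}
    (hG : G.PosSemidef) (hX : X.PosSemidef)
    (hR : (H + Aᴴ * X * (1 + G * X)⁻¹ * A - X).PosSemidef) : (H - steinOp A X).PosSemidef := by
  convert hR.add ((hX.sub_mul_inv_one_add_mul hG).conjTranspose_mul_mul_same A) using 1
  rw [steinOp_apply]
  noncomm_ring

end Matrix

theorem stmt_19 (n : ℕ) (A G H : Matrix (Fin n) (Fin n) ℂ)
    (hρ : ∀ μ ∈ spectrum ℂ A, ‖μ‖ < 1)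
    (hG : G.PosSemidef) (hH : H.PosSemidef) :
    (∃ X : Matrix (Fin n) (Fin n) ℂ, X.PosSemidef ∧
      ((X - Aᴴ * X * A) - H).PosSemidef) ∧
    (∀ X : Matrix (Fin n) (Fin n) ℂ, X.PosSemidef →
      ((H + Aᴴ * X * (1 + G * X)⁻¹ * A) - X).PosSemidef →
      (H - (X - Aᴴ * X * A)).PosSemidef) ∧
    (∀ Z X : Matrix (Fin n) (Fin n) ℂ,
      Z.PosSemidef → ((Z - Aᴴ * Z * A) - H).PosSemidef →
      X.PosSemidef → ((H + Aᴴ * X * (1 + G * X)⁻¹ * A) - X).PosSemidef →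
      (Z - X).PosSemidef) := by
  have hA : Tendsto (A ^ ·) atTop (𝓝 0) := by
    open scoped Matrix.Norms.L2Operator in
    exact tendsto_pow_atTop_nhds_zero_of_forall_norm_lt_one hρ
  refine ⟨?_, fun X hX hR => posSemidef_sub_steinOp_of_posSemidef_riccati_sub hG hX hR, ?_⟩
  · obtain ⟨X, hX, hSX⟩ := exists_posSemidef_steinOp_eq hA hH
    refine ⟨X, hX, ?_⟩
    rw [← steinOp_apply, hSX, sub_self]
    exact .zero
  · intro Z X _ hZ hX hR
    refine posSemidef_of_posSemidef_steinOp hA ?_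
    convert hZ.add (posSemidef_sub_steinOp_of_posSemidef_riccati_sub hG hX hR) using 1
    simp only [steinOp_apply]
    noncomm_ring
end
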